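/- arXiv:quant-ph/0109060 — 2 statements merged into one kernel-verified Lean document; each statement's English description precedes it below -/
import Mathlib

section
/- Let {|ψ¹_j⟩}_{j=1,…,N} be linearly independent unit vectors in ℂ^D and {|ψ²_j⟩}_{j=1,…,N} unit vectors in ℂ^D, with Gram matrices Γ₁ and Γ₂. Suppose there exists an N×N matrix Π of rank at most one of the form Π_{j'j} = c̄_{j'} c_j (for some complex scalars c_j) which is positive semidefinite, has diagonal entries Π_{jj} = p_j, and is such that Γ₁ − Π∘Γ₂ is positive semidefinite. Then there exists a single linear operator A_S on ℂ^D with A_S†A_S ≤ 1 such that A_S|ψ¹_j⟩ = c_j|ψ²_j⟩ and ⟨ψ¹_j|A_S†A_S|ψ¹_j⟩ = |c_j|² = p_j for every j. -/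
/-!
Let `B` and `C` be the matrices whose columns are `ψ¹ⱼ` and `cⱼ ψ²ⱼ`, so that `Γ₁ = BᴴB` and
`Π ∘ Γ₂ = CᴴC`. Linear independence makes `G = BᴴB` invertible, and `A = C G⁻¹ Bᴴ` satisfies
`AB = C`. With `X = B G⁻¹` the hypothesis `CᴴC ≤ G` gives
`AᴴA = X (CᴴC) Xᴴ ≤ X G Xᴴ = B G⁻¹ Bᴴ ≤ 1`, the last step because `B G⁻¹ Bᴴ` is the orthogonal
projection onto the range of `B`.
-/

open Matrix
open scoped ComplexOrder MatrixOrder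

namespace Matrix

variable {𝕜 : Type*} [RCLike 𝕜] {m n : Type*} [Fintype m]

theorem conjTranspose_mul_self_transpose_of (v : n → m → 𝕜) :
    (of v)ᵀᴴ * (of v)ᵀ = of fun j' j ↦ star (v j') ⬝ᵥ v j := by
  ext j' j
  simp [mul_apply, dotProduct]

variable [Fintype n]

theorem star_dotProduct_conjTranspose_mul_self_mulVec (A : Matrix m n 𝕜) (v : n → 𝕜) :
    star v ⬝ᵥ ((Aᴴ * A) *ᵥ v) = star (A *ᵥ v) ⬝ᵥ (A *ᵥ v) := by
  rw [← mulVec_mulVec, dotProduct_mulVec, star_mulVec]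

theorem mul_mul_conjTranspose_le_mul_mul_conjTranspose {A A' : Matrix n n 𝕜} (h : A ≤ A')
    (X : Matrix m n 𝕜) : X * A * Xᴴ ≤ X * A' * Xᴴ := by
  rw [le_iff, ← Matrix.sub_mul, ← Matrix.mul_sub]
  exact (le_iff.mp h).mul_mul_conjTranspose_same X

variable [DecidableEq n]

theorem isStarProjection_mul_inv_mul_conjTranspose (B : Matrix m n 𝕜) (hB : IsUnit (Bᴴ * B)) :
    IsStarProjection (B * (Bᴴ * B)⁻¹ * Bᴴ) where
  isIdempotentElem := by
    calc B * (Bᴴ * B)⁻¹ * Bᴴ * (B * (Bᴴ * B)⁻¹ * Bᴴ)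
        = B * ((Bᴴ * B)⁻¹ * (Bᴴ * B)) * (Bᴴ * B)⁻¹ * Bᴴ := by simp only [Matrix.mul_assoc]
      _ = B * (Bᴴ * B)⁻¹ * Bᴴ := by
        rw [nonsing_inv_mul _ ((isUnit_iff_isUnit_det _).mp hB), Matrix.mul_one]
  isSelfAdjoint := by
    rw [IsSelfAdjoint, star_eq_conjTranspose, conjTranspose_mul, conjTranspose_mul,
      conjTranspose_conjTranspose, conjTranspose_nonsing_inv, conjTranspose_mul,
      conjTranspose_conjTranspose, Matrix.mul_assoc]

variable [DecidableEq m]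

theorem exists_mul_eq_and_conjTranspose_mul_self_le_one (B C : Matrix m n 𝕜)
    (hB : Function.Injective B.mulVec) (hCB : Cᴴ * C ≤ Bᴴ * B) :
    ∃ A : Matrix m m 𝕜, A * B = C ∧ Aᴴ * A ≤ 1 := by
  set G := Bᴴ * B with hGdef
  have hG : IsUnit G := (PosDef.conjTranspose_mul_self B hB).isUnit
  have hGinv : G⁻¹ * G = 1 := nonsing_inv_mul _ ((isUnit_iff_isUnit_det _).mp hG)
  have hGinvH : G⁻¹ᴴ = G⁻¹ := by
    rw [conjTranspose_nonsing_inv, conjTranspose_mul, conjTranspose_conjTranspose]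
  refine ⟨C * G⁻¹ * Bᴴ, by
    rw [Matrix.mul_assoc, Matrix.mul_assoc, ← hGdef, hGinv, Matrix.mul_one], ?_⟩
  calc (C * G⁻¹ * Bᴴ)ᴴ * (C * G⁻¹ * Bᴴ) = (B * G⁻¹) * (Cᴴ * C) * (B * G⁻¹)ᴴ := by
        simp only [conjTranspose_mul, conjTranspose_conjTranspose, hGinvH, Matrix.mul_assoc]
    _ ≤ (B * G⁻¹) * G * (B * G⁻¹)ᴴ := mul_mul_conjTranspose_le_mul_mul_conjTranspose hCB _
    _ = B * G⁻¹ * Bᴴ := by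
        rw [Matrix.mul_assoc B, hGinv, Matrix.mul_one, conjTranspose_mul, hGinvH, Matrix.mul_assoc]
    _ ≤ 1 := (isStarProjection_mul_inv_mul_conjTranspose B hG).le_one

end Matrix

theorem single_operator_sufficiency_general {D N : ℕ}
    (ψ1 ψ2 : Fin N → (Fin D → ℂ))
    (hψ2unit : ∀ j, star (ψ2 j) ⬝ᵥ ψ2 j = 1)
    (hindep : LinearIndependent ℂ ψ1)
    (Γ1 Γ2 : Matrix (Fin N) (Fin N) ℂ)
    (hΓ1 : ∀ j' j, Γ1 j' j = star (ψ1 j') ⬝ᵥ ψ1 j)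
    (hΓ2 : ∀ j' j, Γ2 j' j = star (ψ2 j') ⬝ᵥ ψ2 j)
    (c : Fin N → ℂ)
    (Pmat : Matrix (Fin N) (Fin N) ℂ)
    (hPform : ∀ j' j, Pmat j' j = star (c j') * c j)
    (p : Fin N → ℝ)
    (hPdiag : ∀ j, Pmat j j = (p j : ℂ))
    (hG : (Γ1 - Matrix.hadamard Pmat Γ2).PosSemidef) :
    ∃ AS : Matrix (Fin D) (Fin D) ℂ,
      (1 - ASᴴ * AS).PosSemidef ∧
      (∀ j, AS *ᵥ ψ1 j = c j • ψ2 j) ∧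
      (∀ j, star (ψ1 j) ⬝ᵥ ((ASᴴ * AS) *ᵥ ψ1 j) = (p j : ℂ)) ∧
      (∀ j, ‖c j‖ ^ 2 = p j) := by
  have hcc (j : Fin N) : star (c j) * c j = p j := (hPform j j).symm.trans (hPdiag j)
  have hB : (of ψ1)ᵀᴴ * (of ψ1)ᵀ = Γ1 := by
    ext; simp [conjTranspose_mul_self_transpose_of, hΓ1]
  have hC : (of fun j ↦ c j • ψ2 j)ᵀᴴ * (of fun j ↦ c j • ψ2 j)ᵀ = Pmat ⊙ Γ2 := by
    ext; simp [conjTranspose_mul_self_transpose_of, hΓ2, hPform, mul_assoc, mul_left_comm]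
  obtain ⟨A, hAB, hA⟩ := exists_mul_eq_and_conjTranspose_mul_self_le_one (of ψ1)ᵀ
    (of fun j ↦ c j • ψ2 j)ᵀ (mulVec_injective_iff.mpr hindep) (by rwa [le_iff, hB, hC])
  have hAψ (j : Fin N) : A *ᵥ ψ1 j = c j • ψ2 j := by
    have := congrArg (· *ᵥ Pi.single j 1) hAB
    rwa [← mulVec_mulVec, mulVec_single_one, mulVec_single_one] at this
  refine ⟨A, hA, hAψ, fun j ↦ ?_, fun j ↦ ?_⟩
  · rw [star_dotProduct_conjTranspose_mul_self_mulVec, hAψ, star_smul, smul_dotProduct,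
      dotProduct_smul, hψ2unit, ← hcc]
    simp
  · exact_mod_cast (Complex.conj_mul' (c j)).symm.trans (hcc j)

/-- **Single-operator transformation, sufficiency.**  If the unit vectors
`ψ1 j` are linearly independent and there is a rank-at-most-one matrix `Π` of
the form `Π_{j'j} = conj (c j') * c j` which is positive semidefinite, has
diagonal `p`, and is such that `Γ₁ - Π ∘ Γ₂` is positive semidefinite, then
there is a single operator `A_S` with `A_S† A_S ≤ 1` realising the
transformation `ψ1 j ↦ c j • ψ2 j` with probabilities `p`. -/
theorem single_operator_sufficiency {D N : ℕ}
    (ψ1 ψ2 : Fin N → (Fin D → ℂ))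
    (hψ1unit : ∀ j, star (ψ1 j) ⬝ᵥ ψ1 j = 1)
    (hψ2unit : ∀ j, star (ψ2 j) ⬝ᵥ ψ2 j = 1)
    (hindep : LinearIndependent ℂ ψ1)
    (Γ1 Γ2 : Matrix (Fin N) (Fin N) ℂ)
    (hΓ1 : ∀ j' j, Γ1 j' j = star (ψ1 j') ⬝ᵥ ψ1 j)
    (hΓ2 : ∀ j' j, Γ2 j' j = star (ψ2 j') ⬝ᵥ ψ2 j)
    (c : Fin N → ℂ)
    (Pmat : Matrix (Fin N) (Fin N) ℂ)
    (hPform : ∀ j' j, Pmat j' j = star (c j') * c j)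
    (hPrank : Matrix.rank Pmat ≤ 1)
    (hPpos : Pmat.PosSemidef)
    (p : Fin N → ℝ)
    (hPdiag : ∀ j, Pmat j j = (p j : ℂ))
    (hG : (Γ1 - Matrix.hadamard Pmat Γ2).PosSemidef) :
    ∃ AS : Matrix (Fin D) (Fin D) ℂ,
      (1 - ASᴴ * AS).PosSemidef ∧
      (∀ j, AS *ᵥ ψ1 j = c j • ψ2 j) ∧
      (∀ j, star (ψ1 j) ⬝ᵥ ((ASᴴ * AS) *ᵥ ψ1 j) = (p j : ℂ)) ∧
      (∀ j, ‖c j‖ ^ 2 = p j) :=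
  single_operator_sufficiency_general ψ1 ψ2 hψ2unit hindep Γ1 Γ2 hΓ1 hΓ2 c Pmat hPform p hPdiag hG
end

section
/- (Theorem 3.) Let {|ψ¹_j⟩}_{j=1,…,N} and {|ψ²_j⟩}_{j=1,…,N} be unit vectors in ℂ^D, and suppose there exists a deterministic transformation taking |ψ¹_j⟩ to |ψ²_j⟩ for all j: a finite family of operators {A_k} on ℂ^D with Σ_k A_k†A_k = 1 such that A_k|ψ¹_j⟩ = c_{kj}|ψ²_j⟩ for complex scalars c_{kj} with Σ_k |c_{kj}|² = 1 for every j. Then for every probability vector q = (q_j) (q_j ≥ 0, Σ_j q_j = 1), the density matrices ρ₁(q) = Σ_j q_j |ψ¹_j⟩⟨ψ¹_j| and ρ₂(q) = Σ_j q_j |ψ²_j⟩⟨ψ²_j| satisfy the majorization relation λ(ρ₁(q)) ≺ λ(ρ₂(q)). -/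
/-!
Write `ρᵢ = Xᵢ Xᵢᴴ`, where the columns of `Xᵢ` are `√q_j ψⁱ_j`. Since `A_k X₁ = X₂ diag(c_k)` and
`Σ A_kᴴ A_k = 1`, the Gram matrices satisfy `X₁ᴴ X₁ = Σ_k diag(c_k)ᴴ (X₂ᴴ X₂) diag(c_k)`, and
`Σ_k |c_kj|² = 1` makes this channel unital and trace preserving. Whenever
`diag(a) = Σ_k K_k diag(b) K_kᴴ` with `Σ K_k K_kᴴ = Σ K_kᴴ K_k = 1`, we get `a = P b` for the doubly
stochastic matrix `P i m = Σ_k |K_k i m|²`; writing the channel in eigenbases gives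
`λ(X₁ᴴ X₁) = P λ(X₂ᴴ X₂)`. Since `AB` and `BA` have the same characteristic polynomial, `XXᴴ` and
`XᴴX` have the same spectrum up to zeros, so after padding to the index set `Fin D ⊕ Fin N` we
obtain `(λ(ρ₁), 0) = P (λ(ρ₂), 0)` with `P` doubly stochastic. A fractional Ky Fan bound turns
this into majorization.
-/

open Matrix BigOperators
open scoped ComplexOrder

/-- The sum of the `k` largest entries of `x`, expressed as the supremum of the
sums of `x` over all subsets of cardinality `k`. -/
noncomputable def kMaxSum {D : ℕ} (x : Fin D → ℝ) (k : ℕ) : ℝ :=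
  sSup ((fun A : Finset (Fin D) => ∑ i ∈ A, x i) '' {A : Finset (Fin D) | A.card = k})

/-- `x` is majorized by `y` (`x ≺ y`): every partial sum of the `k` largest
entries of `x` is at most the corresponding sum for `y`, and the total sums
coincide. -/
def MajorizedBy {D : ℕ} (x y : Fin D → ℝ) : Prop :=
  (∀ k, k ≤ D → kMaxSum x k ≤ kMaxSum y k) ∧ (∑ i, x i = ∑ i, y i)

lemma sum_le_kMaxSum {D k : ℕ} (x : Fin D → ℝ) {S : Finset (Fin D)} (hS : S.card = k) :
    ∑ i ∈ S, x i ≤ kMaxSum x k :=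
  le_csSup ((Set.toFinite _).image _).bddAbove ⟨S, hS, rfl⟩

lemma kMaxSum_le {D k : ℕ} (x : Fin D → ℝ) (hk : k ≤ D) {B : ℝ}
    (h : ∀ S : Finset (Fin D), S.card = k → ∑ i ∈ S, x i ≤ B) : kMaxSum x k ≤ B := by
  obtain ⟨S, -, hS⟩ := Finset.exists_subset_card_eq (s := (Finset.univ : Finset (Fin D)))
    (by simpa using hk)
  exact csSup_le ⟨_, S, hS, rfl⟩ (by rintro _ ⟨S, hS, rfl⟩; exact h S hS)

lemma exists_finset_card_eq_threshold {ι : Type*} [Fintype ι] {y : ι → ℝ} (hy : 0 ≤ y) {k : ℕ}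
    (hk : k ≤ Fintype.card ι) :
    ∃ (S : Finset ι) (c : ℝ), S.card = k ∧ 0 ≤ c ∧ (∀ i ∈ S, c ≤ y i) ∧ ∀ j ∉ S, y j ≤ c := by
  classical
  induction k with
  | zero =>
    exact ⟨∅, ∑ i, y i, rfl, Finset.sum_nonneg fun i _ => hy i, by simp,
      fun j _ => Finset.single_le_sum (fun i _ => hy i) (Finset.mem_univ j)⟩
  | succ k ih =>
    obtain ⟨S, c, hS, -, hSc, hcS⟩ := ih (by omega)
    have hne : Sᶜ.Nonempty := by
      rw [← Finset.card_pos, Finset.card_compl]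
      omega
    obtain ⟨j₀, hj₀, hmax⟩ := Finset.exists_max_image Sᶜ y hne
    rw [Finset.mem_compl] at hj₀
    refine ⟨insert j₀ S, y j₀, by rw [Finset.card_insert_of_notMem hj₀, hS], hy j₀, ?_, ?_⟩
    · simp only [Finset.mem_insert, forall_eq_or_imp, le_refl, true_and]
      exact fun i hi => (hcS j₀ hj₀).trans (hSc i hi)
    · intro j hj
      rw [Finset.mem_insert, not_or] at hj
      exact hmax j (Finset.mem_compl.2 hj.2)

lemma sum_mul_le_kMaxSum {D k : ℕ} {y t : Fin D → ℝ} (hy : 0 ≤ y) (ht₀ : 0 ≤ t)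
    (ht₁ : ∀ m, t m ≤ 1) (htk : ∑ m, t m ≤ k) (hk : k ≤ D) :
    ∑ m, t m * y m ≤ kMaxSum y k := by
  obtain ⟨S, c, hS, hc, hSc, hcS⟩ := exists_finset_card_eq_threshold hy (k := k)
    (by rwa [Fintype.card_fin])
  refine le_trans ?_ (sum_le_kMaxSum y hS)
  have hterm : ∀ m, t m * y m - c * t m ≤ if m ∈ S then y m - c else 0 := by
    intro m
    split_ifs with hm
    · nlinarith [mul_nonneg (sub_nonneg.2 (ht₁ m)) (sub_nonneg.2 (hSc m hm))]
    · nlinarith [mul_nonneg (ht₀ m) (sub_nonneg.2 (hcS m hm))]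
  have hsum := Finset.sum_le_sum fun m (_ : m ∈ Finset.univ) => hterm m
  rw [Finset.sum_ite_mem, Finset.univ_inter, Finset.sum_sub_distrib, Finset.sum_sub_distrib,
    Finset.sum_const, hS, nsmul_eq_mul, ← Finset.mul_sum] at hsum
  nlinarith

theorem majorizedBy_of_sumElim_eq_mulVec {D : ℕ} {ι : Type*} [Fintype ι] [DecidableEq ι]
    {x y : Fin D → ℝ} (hy : 0 ≤ y) {P : Matrix (Fin D ⊕ ι) (Fin D ⊕ ι) ℝ}
    (hP : P ∈ doublyStochastic ℝ (Fin D ⊕ ι)) (h : Sum.elim x 0 = P *ᵥ Sum.elim y 0) :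
    MajorizedBy x y := by
  have hP₀ := fun I J => nonneg_of_mem_doublyStochastic hP (i := I) (j := J)
  refine ⟨fun k hk => kMaxSum_le x hk fun S hS => ?_, ?_⟩
  · set t : Fin D → ℝ := fun m => ∑ i ∈ S, P (.inl i) (.inl m)
    have hx : ∑ i ∈ S, x i = ∑ m, t m * y m := by
      simp only [t, Finset.sum_mul]
      rw [Finset.sum_comm]
      refine Finset.sum_congr rfl fun i _ => ?_
      simpa [mulVec, dotProduct, Fintype.sum_sum_type] using congrFun h (.inl i)
    rw [hx]
    refine sum_mul_le_kMaxSum hy (fun m => Finset.sum_nonneg fun i _ => hP₀ _ _)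
      (fun m => ?_) ?_ hk
    · calc t m ≤ ∑ I, P I (.inl m) := by
            rw [Fintype.sum_sum_type]
            exact le_add_of_le_of_nonneg (Finset.sum_le_univ_sum_of_nonneg fun i => hP₀ _ _)
              (Finset.sum_nonneg fun _ _ => hP₀ _ _)
        _ = 1 := sum_col_of_mem_doublyStochastic hP _
    · calc ∑ m, t m ≤ ∑ i ∈ S, ∑ J, P (.inl i) J := by
            rw [Finset.sum_comm]
            refine Finset.sum_le_sum fun i _ => ?_
            rw [Fintype.sum_sum_type]
            exact le_add_of_nonneg_right (Finset.sum_nonneg fun _ _ => hP₀ _ _)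
        _ = k := by simp [sum_row_of_mem_doublyStochastic hP, hS]
  · simpa [← h, Fintype.sum_sum_type] using
      sum_mulVec_of_mem_doublyStochastic (x := Sum.elim y 0) hP

namespace Matrix

section Unitary

variable {ι κ : Type*} [Fintype ι] [DecidableEq ι] [Fintype κ]

lemma mul_diagonal_mul_conjTranspose_apply_self (K : Matrix ι ι ℂ) (d : ι → ℂ) (i : ι) :
    (K * diagonal d * Kᴴ) i i = ∑ m, ((‖K i m‖ ^ 2 : ℝ) : ℂ) * d m := by
  rw [mul_apply]
  refine Finset.sum_congr rfl fun m _ => ?_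
  rw [mul_diagonal, conjTranspose_apply, Complex.ofReal_pow, ← Complex.mul_conj']
  simp only [RCLike.star_def]
  ring

theorem exists_mem_doublyStochastic_of_diagonal_eq_sum {K : κ → Matrix ι ι ℂ}
    (h₁ : ∑ k, K k * (K k)ᴴ = 1) (h₂ : ∑ k, (K k)ᴴ * K k = 1) {a b : ι → ℝ}
    (h : diagonal (fun i => (a i : ℂ)) = ∑ k, K k * diagonal (fun i => (b i : ℂ)) * (K k)ᴴ) :
    ∃ P ∈ doublyStochastic ℝ ι, a = P *ᵥ b := by
  have key : ∀ (L : κ → Matrix ι ι ℂ) (d : ι → ℂ) i,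
      (∑ k, L k * diagonal d * (L k)ᴴ) i i = ∑ m, ((∑ k, ‖L k i m‖ ^ 2 : ℝ) : ℂ) * d m := by
    intro L d i
    simp only [sum_apply, mul_diagonal_mul_conjTranspose_apply_self, Complex.ofReal_sum,
      Finset.sum_mul]
    exact Finset.sum_comm
  refine ⟨of fun i m => ∑ k, ‖K k i m‖ ^ 2, mem_doublyStochastic_iff_sum.2
    ⟨fun i m => Finset.sum_nonneg fun _ _ => by positivity, fun i => ?_, fun m => ?_⟩,
    funext fun i => ?_⟩
  · have := key K (fun _ => 1) i
    simp only [diagonal_one, h₁, one_apply_eq, mul_one] at this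
    exact_mod_cast this.symm
  · have := key (fun k => (K k)ᴴ) (fun _ => 1) m
    simp only [diagonal_one, conjTranspose_conjTranspose, h₂, one_apply_eq, mul_one,
      conjTranspose_apply, norm_star] at this
    exact_mod_cast this.symm
  · have := congrFun (congrFun h i) i
    rw [key, diagonal_apply_eq] at this
    exact_mod_cast this

theorem exists_mem_doublyStochastic_of_conj_diagonal_eq_sum {V W : Matrix ι ι ℂ}
    (hV : V ∈ unitaryGroup ι ℂ) (hW : W ∈ unitaryGroup ι ℂ) {Γ : κ → Matrix ι ι ℂ}
    (h₁ : ∑ k, (Γ k)ᴴ * Γ k = 1) (h₂ : ∑ k, Γ k * (Γ k)ᴴ = 1) {a b : ι → ℝ}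
    (h : V * diagonal (fun i => (a i : ℂ)) * Vᴴ =
      ∑ k, (Γ k)ᴴ * (W * diagonal (fun i => (b i : ℂ)) * Wᴴ) * Γ k) :
    ∃ P ∈ doublyStochastic ℝ ι, a = P *ᵥ b := by
  rw [mem_unitaryGroup_iff, star_eq_conjTranspose] at hV hW
  have hV' : Vᴴ * V = 1 := mul_eq_one_comm.1 hV
  have hW' : Wᴴ * W = 1 := mul_eq_one_comm.1 hW
  refine exists_mem_doublyStochastic_of_diagonal_eq_sum (K := fun k => Vᴴ * (Γ k)ᴴ * W)
    ?_ ?_ ?_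
  · calc ∑ k, Vᴴ * (Γ k)ᴴ * W * (Vᴴ * (Γ k)ᴴ * W)ᴴ = Vᴴ * (∑ k, (Γ k)ᴴ * Γ k) * V := by
          simp only [conjTranspose_mul, conjTranspose_conjTranspose, Finset.mul_sum,
            Finset.sum_mul, Matrix.mul_assoc]
          simp only [← Matrix.mul_assoc W, hW, Matrix.one_mul]
      _ = 1 := by rw [h₁, Matrix.mul_one, hV']
  · calc ∑ k, (Vᴴ * (Γ k)ᴴ * W)ᴴ * (Vᴴ * (Γ k)ᴴ * W) = Wᴴ * (∑ k, Γ k * (Γ k)ᴴ) * W := by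
          simp only [conjTranspose_mul, conjTranspose_conjTranspose, Finset.mul_sum,
            Finset.sum_mul, Matrix.mul_assoc]
          simp only [← Matrix.mul_assoc V, hV, Matrix.one_mul]
      _ = 1 := by rw [h₂, Matrix.mul_one, hW']
  · calc diagonal (fun i => (a i : ℂ)) = Vᴴ * (V * diagonal (fun i => (a i : ℂ)) * Vᴴ) * V := by
          simp only [← Matrix.mul_assoc, hV', Matrix.one_mul]
          rw [Matrix.mul_assoc, hV', Matrix.mul_one]
      _ = _ := by
          rw [h, Finset.mul_sum, Finset.sum_mul]
          simp only [conjTranspose_mul, conjTranspose_conjTranspose, Matrix.mul_assoc]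

theorem exists_mem_doublyStochastic_of_conj_diagonal_eq {V W : Matrix ι ι ℂ}
    (hV : V ∈ unitaryGroup ι ℂ) (hW : W ∈ unitaryGroup ι ℂ) {a b : ι → ℝ}
    (h : V * diagonal (fun i => (a i : ℂ)) * Vᴴ = W * diagonal (fun i => (b i : ℂ)) * Wᴴ) :
    ∃ P ∈ doublyStochastic ℝ ι, a = P *ᵥ b :=
  exists_mem_doublyStochastic_of_conj_diagonal_eq_sum hV hW (Γ := fun _ : Unit => 1)
    (by simp) (by simp) (by simpa using h)

lemma IsHermitian.eq_eigenvectorUnitary_mul_diagonal {A : Matrix ι ι ℂ} (hA : A.IsHermitian) :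
    A = (hA.eigenvectorUnitary : Matrix ι ι ℂ) * diagonal (fun i => (hA.eigenvalues i : ℂ)) *
      (hA.eigenvectorUnitary : Matrix ι ι ℂ)ᴴ := by
  simpa [Function.comp_def, star_eq_conjTranspose] using hA.spectral_theorem

theorem IsHermitian.exists_mem_doublyStochastic_eigenvalues_eq_mulVec {A B : Matrix ι ι ℂ}
    (hA : A.IsHermitian) (hB : B.IsHermitian) {Γ : κ → Matrix ι ι ℂ}
    (h₁ : ∑ k, (Γ k)ᴴ * Γ k = 1) (h₂ : ∑ k, Γ k * (Γ k)ᴴ = 1)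
    (h : A = ∑ k, (Γ k)ᴴ * B * Γ k) :
    ∃ P ∈ doublyStochastic ℝ ι, hA.eigenvalues = P *ᵥ hB.eigenvalues := by
  refine exists_mem_doublyStochastic_of_conj_diagonal_eq_sum hA.eigenvectorUnitary.2
    hB.eigenvectorUnitary.2 h₁ h₂ ?_
  rw [← hA.eq_eigenvectorUnitary_mul_diagonal, ← hB.eq_eigenvectorUnitary_mul_diagonal, h]

lemma eigenvalues_mul_conjTranspose_self_eq (X : Matrix ι ι ℂ) (h : (X * Xᴴ).IsHermitian)
    (h' : (Xᴴ * X).IsHermitian) : h.eigenvalues = h'.eigenvalues :=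
  (IsHermitian.eigenvalues_eq_eigenvalues_iff h h').2 (charpoly_mul_comm _ _)

end Unitary

section Blocks

variable {m n : Type*} [Fintype m] [DecidableEq m] [Fintype n] [DecidableEq n]

lemma fromBlocks_mem_unitaryGroup {U : Matrix m m ℂ} {V : Matrix n n ℂ}
    (hU : U ∈ unitaryGroup m ℂ) (hV : V ∈ unitaryGroup n ℂ) :
    fromBlocks U 0 0 V ∈ unitaryGroup (m ⊕ n) ℂ := by
  rw [mem_unitaryGroup_iff, star_eq_conjTranspose] at *
  simp [fromBlocks_conjTranspose, fromBlocks_multiply, hU, hV]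

lemma IsHermitian.fromBlocks_zero_eq {A : Matrix m m ℂ} (hA : A.IsHermitian) :
    Matrix.fromBlocks A 0 0 (0 : Matrix n n ℂ) =
      Matrix.fromBlocks (hA.eigenvectorUnitary : Matrix m m ℂ) 0 0 1 *
        diagonal (fun i => ((Sum.elim hA.eigenvalues 0 i : ℝ) : ℂ)) *
        (Matrix.fromBlocks (hA.eigenvectorUnitary : Matrix m m ℂ) 0 0 1)ᴴ := by
  have hd : (fun i => ((Sum.elim hA.eigenvalues (0 : n → ℝ) i : ℝ) : ℂ)) =
      Sum.elim (fun i => (hA.eigenvalues i : ℂ)) 0 := by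
    ext (_ | _) <;> simp
  conv_lhs => rw [hA.eq_eigenvectorUnitary_mul_diagonal]
  rw [hd, ← fromBlocks_diagonal]
  simp [fromBlocks_conjTranspose, fromBlocks_multiply]

lemma conjTranspose_mul_self_fromBlocks (X : Matrix m n ℂ) :
    (fromBlocks 0 X 0 0 : Matrix (m ⊕ n) (m ⊕ n) ℂ)ᴴ * fromBlocks 0 X 0 0 =
      fromBlocks 0 0 0 (Xᴴ * X) := by
  simp [fromBlocks_conjTranspose, fromBlocks_multiply]

theorem exists_mem_doublyStochastic_sumElim_eigenvalues (X : Matrix m n ℂ) {ρ : Matrix m m ℂ}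
    (hρ : ρ = X * Xᴴ) (h : ρ.IsHermitian)
    (hG : ((fromBlocks 0 X 0 0)ᴴ * fromBlocks 0 X 0 0 : Matrix (m ⊕ n) (m ⊕ n) ℂ).IsHermitian) :
    (∃ P ∈ doublyStochastic ℝ (m ⊕ n), Sum.elim h.eigenvalues 0 = P *ᵥ hG.eigenvalues) ∧
      ∃ P ∈ doublyStochastic ℝ (m ⊕ n), hG.eigenvalues = P *ᵥ Sum.elim h.eigenvalues 0 := by
  set Y : Matrix (m ⊕ n) (m ⊕ n) ℂ := fromBlocks 0 X 0 0
  have hR := isHermitian_mul_conjTranspose_self Y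
  have hdiag : (hR.eigenvectorUnitary : Matrix (m ⊕ n) (m ⊕ n) ℂ) *
      diagonal (fun i => (hG.eigenvalues i : ℂ)) *
      (hR.eigenvectorUnitary : Matrix (m ⊕ n) (m ⊕ n) ℂ)ᴴ =
      fromBlocks (h.eigenvectorUnitary : Matrix m m ℂ) 0 0 1 *
        diagonal (fun i => ((Sum.elim h.eigenvalues 0 i : ℝ) : ℂ)) *
        (fromBlocks (h.eigenvectorUnitary : Matrix m m ℂ) 0 0 1)ᴴ := by
    rw [← eigenvalues_mul_conjTranspose_self_eq Y hR hG, ← hR.eq_eigenvectorUnitary_mul_diagonal,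
      ← h.fromBlocks_zero_eq]
    simp [Y, fromBlocks_conjTranspose, fromBlocks_multiply, hρ]
  have hV := fromBlocks_mem_unitaryGroup h.eigenvectorUnitary.2 (one_mem (unitaryGroup n ℂ))
  exact ⟨exists_mem_doublyStochastic_of_conj_diagonal_eq hV hR.eigenvectorUnitary.2 hdiag.symm,
    exists_mem_doublyStochastic_of_conj_diagonal_eq hR.eigenvectorUnitary.2 hV hdiag⟩

end Blocks

section Kraus

variable {m n κ : Type*} [Fintype m] [DecidableEq m] [Fintype n] [DecidableEq n] [Fintype κ]

/-- The extra operator `none` is the identity on the padding block `m`, which keeps the family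
unital. -/
def padKraus (Γ : κ → Matrix n n ℂ) : Option κ → Matrix (m ⊕ n) (m ⊕ n) ℂ :=
  fun o => o.elim (fromBlocks 1 0 0 0) fun k => fromBlocks 0 0 0 (Γ k)

lemma sum_conjTranspose_padKraus_mul {Γ : κ → Matrix n n ℂ} (h : ∑ k, (Γ k)ᴴ * Γ k = 1) :
    ∑ o, (padKraus (m := m) Γ o)ᴴ * padKraus Γ o = 1 := by
  ext (i | i) (j | j) <;>
    simp [padKraus, fromBlocks_conjTranspose, fromBlocks_multiply, sum_apply,
      Fintype.sum_option, one_apply]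
  simpa [sum_apply, one_apply] using congrFun (congrFun h i) j

lemma sum_padKraus_mul_conjTranspose {Γ : κ → Matrix n n ℂ} (h : ∑ k, Γ k * (Γ k)ᴴ = 1) :
    ∑ o, padKraus (m := m) Γ o * (padKraus Γ o)ᴴ = 1 := by
  ext (i | i) (j | j) <;>
    simp [padKraus, fromBlocks_conjTranspose, fromBlocks_multiply, sum_apply,
      Fintype.sum_option, one_apply]
  simpa [sum_apply, one_apply] using congrFun (congrFun h i) j

lemma sum_conjTranspose_padKraus_mul_fromBlocks (Γ : κ → Matrix n n ℂ) (G : Matrix n n ℂ) :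
    ∑ o, (padKraus (m := m) Γ o)ᴴ * fromBlocks 0 0 0 G * padKraus Γ o =
      fromBlocks 0 0 0 (∑ k, (Γ k)ᴴ * G * Γ k) := by
  ext (i | i) (j | j) <;>
    simp [padKraus, fromBlocks_conjTranspose, fromBlocks_multiply, sum_apply,
      Fintype.sum_option]

end Kraus

section Diagonal

variable {n κ : Type*} [Fintype n] [DecidableEq n] [Fintype κ]

lemma sum_conjTranspose_diagonal_mul {c : κ → n → ℂ} (hc : ∀ j, ∑ k, ‖c k j‖ ^ 2 = 1) :
    ∑ k, (diagonal (c k))ᴴ * diagonal (c k) = 1 := by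
  ext i j
  simp only [diagonal_conjTranspose, diagonal_mul_diagonal, sum_apply, diagonal_apply,
    one_apply, Pi.star_apply, RCLike.star_def, Complex.conj_mul']
  split_ifs <;> simp [← Complex.ofReal_pow, ← Complex.ofReal_sum, hc]

lemma sum_diagonal_mul_conjTranspose {c : κ → n → ℂ} (hc : ∀ j, ∑ k, ‖c k j‖ ^ 2 = 1) :
    ∑ k, diagonal (c k) * (diagonal (c k))ᴴ = 1 := by
  simpa only [diagonal_conjTranspose, diagonal_mul_diagonal, mul_comm] using
    sum_conjTranspose_diagonal_mul hc

end Diagonal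

section Ensemble

variable {m n : Type*} [Fintype n]

lemma conjTranspose_mul_self_eq_sum {κ : Type*} [Fintype κ] [Fintype m] [DecidableEq m]
    {A : κ → Matrix m m ℂ} (hA : ∑ k, (A k)ᴴ * A k = 1)
    {X Y : Matrix m n ℂ} {Γ : κ → Matrix n n ℂ} (h : ∀ k, A k * X = Y * Γ k) :
    Xᴴ * X = ∑ k, (Γ k)ᴴ * (Yᴴ * Y) * Γ k := calc
  Xᴴ * X = Xᴴ * (∑ k, (A k)ᴴ * A k) * X := by rw [hA, Matrix.mul_one]
  _ = ∑ k, (A k * X)ᴴ * (A k * X) := by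
    simp only [Matrix.mul_sum, Matrix.sum_mul, conjTranspose_mul, Matrix.mul_assoc]
  _ = _ := by simp only [h, conjTranspose_mul, Matrix.mul_assoc]

noncomputable def ensembleFactor (ψ : n → m → ℂ) (q : n → ℝ) : Matrix m n ℂ :=
  of fun i j => (√(q j) : ℂ) * ψ j i

lemma ensembleFactor_mul_conjTranspose (ψ : n → m → ℂ) {q : n → ℝ} (hq : 0 ≤ q) :
    ensembleFactor ψ q * (ensembleFactor ψ q)ᴴ =
      ∑ j, (q j : ℂ) • vecMulVec (ψ j) (star (ψ j)) := by
  ext a b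
  simp only [ensembleFactor, mul_apply, conjTranspose_apply, of_apply, sum_apply, smul_apply,
    vecMulVec_apply, Pi.star_apply, smul_eq_mul, star_mul', Complex.star_def, Complex.conj_ofReal]
  refine Finset.sum_congr rfl fun j _ => ?_
  have hsq : (√(q j) : ℂ) * √(q j) = q j := by exact_mod_cast Real.mul_self_sqrt (hq j)
  linear_combination ψ j a * starRingEnd ℂ (ψ j b) * hsq

lemma mul_ensembleFactor [Fintype m] [DecidableEq n] {A : Matrix m m ℂ} {ψ₁ ψ₂ : n → m → ℂ}
    {c : n → ℂ} (h : ∀ j, A *ᵥ ψ₁ j = c j • ψ₂ j) (q : n → ℝ) :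
    A * ensembleFactor ψ₁ q = ensembleFactor ψ₂ q * diagonal c := by
  ext i j
  have := congrFun (h j) i
  simp only [mulVec, dotProduct, Pi.smul_apply, smul_eq_mul] at this
  rw [mul_diagonal, mul_apply]
  simp only [ensembleFactor, of_apply, mul_left_comm (A i _), ← Finset.mul_sum, this]
  ring

end Ensemble

end Matrix

theorem theorem3_deterministic_majorization_general {D N M : ℕ}
    (ψ1 ψ2 : Fin N → (Fin D → ℂ))
    (A : Fin M → Matrix (Fin D) (Fin D) ℂ)
    (c : Fin M → Fin N → ℂ)
    (hA1 : ∑ k, (A k)ᴴ * A k = 1)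
    (hAct : ∀ k j, (A k) *ᵥ ψ1 j = c k j • ψ2 j)
    (hc : ∀ j, ∑ k, ‖c k j‖ ^ 2 = 1) :
    ∀ (q : Fin N → ℝ), (∀ j, 0 ≤ q j) → (∑ j, q j = 1) →
      ∀ (h1 : (∑ j, (q j : ℂ) • Matrix.vecMulVec (ψ1 j) (star (ψ1 j))).IsHermitian)
        (h2 : (∑ j, (q j : ℂ) • Matrix.vecMulVec (ψ2 j) (star (ψ2 j))).IsHermitian),
        MajorizedBy h1.eigenvalues h2.eigenvalues := by
  intro q hq _ h1 h2
  set X₁ := ensembleFactor ψ1 q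
  set X₂ := ensembleFactor ψ2 q
  have hρ₁ := ensembleFactor_mul_conjTranspose ψ1 hq
  have hρ₂ := ensembleFactor_mul_conjTranspose ψ2 hq
  have hG₁ := isHermitian_conjTranspose_mul_self
    (fromBlocks (0 : Matrix (Fin D) (Fin D) ℂ) X₁ 0 (0 : Matrix (Fin N) (Fin N) ℂ))
  have hG₂ := isHermitian_conjTranspose_mul_self
    (fromBlocks (0 : Matrix (Fin D) (Fin D) ℂ) X₂ 0 (0 : Matrix (Fin N) (Fin N) ℂ))
  obtain ⟨⟨P₁, hP₁, e₁⟩, -⟩ := exists_mem_doublyStochastic_sumElim_eigenvalues X₁ hρ₁.symm h1 hG₁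
  obtain ⟨-, ⟨P₃, hP₃, e₃⟩⟩ := exists_mem_doublyStochastic_sumElim_eigenvalues X₂ hρ₂.symm h2 hG₂
  have hGram : X₁ᴴ * X₁ = ∑ k, (diagonal (c k))ᴴ * (X₂ᴴ * X₂) * diagonal (c k) :=
    conjTranspose_mul_self_eq_sum hA1 fun k => mul_ensembleFactor (hAct k) q
  obtain ⟨P₂, hP₂, e₂⟩ := hG₁.exists_mem_doublyStochastic_eigenvalues_eq_mulVec hG₂
    (sum_conjTranspose_padKraus_mul (sum_conjTranspose_diagonal_mul hc))
    (sum_padKraus_mul_conjTranspose (sum_diagonal_mul_conjTranspose hc))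
    (by rw [conjTranspose_mul_self_fromBlocks, conjTranspose_mul_self_fromBlocks,
      sum_conjTranspose_padKraus_mul_fromBlocks, hGram])
  have hnonneg : 0 ≤ h2.eigenvalues :=
    (hρ₂ ▸ posSemidef_self_mul_conjTranspose X₂).eigenvalues_nonneg
  exact majorizedBy_of_sumElim_eq_mulVec hnonneg (mul_mem (mul_mem hP₁ hP₂) hP₃)
    (by rw [e₁, e₂, e₃, mulVec_mulVec, mulVec_mulVec])

/-- **Theorem 3.**  If a deterministic transformation takes the unit vectors
`ψ1 j` to the unit vectors `ψ2 j`, then for every probability vector `q` the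
ensemble density matrices `ρ₁(q) = Σ q_j |ψ¹_j⟩⟨ψ¹_j|` and
`ρ₂(q) = Σ q_j |ψ²_j⟩⟨ψ²_j|` satisfy `λ(ρ₁(q)) ≺ λ(ρ₂(q))`. -/
theorem theorem3_deterministic_majorization {D N M : ℕ}
    (ψ1 ψ2 : Fin N → (Fin D → ℂ))
    (hψ1unit : ∀ j, star (ψ1 j) ⬝ᵥ ψ1 j = 1)
    (hψ2unit : ∀ j, star (ψ2 j) ⬝ᵥ ψ2 j = 1)
    (A : Fin M → Matrix (Fin D) (Fin D) ℂ)
    (c : Fin M → Fin N → ℂ)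
    (hA1 : ∑ k, (A k)ᴴ * A k = 1)
    (hAct : ∀ k j, (A k) *ᵥ ψ1 j = c k j • ψ2 j)
    (hc : ∀ j, ∑ k, ‖c k j‖ ^ 2 = 1) :
    ∀ (q : Fin N → ℝ), (∀ j, 0 ≤ q j) → (∑ j, q j = 1) →
      ∀ (h1 : (∑ j, (q j : ℂ) • Matrix.vecMulVec (ψ1 j) (star (ψ1 j))).IsHermitian)
        (h2 : (∑ j, (q j : ℂ) • Matrix.vecMulVec (ψ2 j) (star (ψ2 j))).IsHermitian),
        MajorizedBy h1.eigenvalues h2.eigenvalues :=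
  theorem3_deterministic_majorization_general ψ1 ψ2 A c hA1 hAct hc
end
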